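/- arXiv:2507.22388 — 2 statements merged into one kernel-verified Lean document; each statement's English description precedes it below -/
import Mathlib

section
/- Let D = (V, A, ψ) be a balanced multidigraph, let s, t ∈ V, and let k ∈ ℕ. Let P and Q be two nonempty subsets of V with V = P ⊔ Q. Then |{B ∈ U_k : S(B) = P}| = |{B ∈ U_k : T(B) = Q}|. -/
/-!
A multidigraph is given by two finite types `V` (vertices) and `A` (arcs)
together with a map `ψ : A → V × V` sending each arc to its (source, target) pair.
For a subset `B ⊆ A`, the induced subdigraph `D⟨B⟩` has vertex set `V` and arc set `B`.
-/

/-- There is an arc of `B` from `v` to `w` in the subdigraph `D⟨B⟩`. -/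
def ArcStep {V A : Type*} (ψ : A → V × V) (B : Set A) (v w : V) : Prop :=
  ∃ a ∈ B, ψ a = (v, w)

/-- `v` can `B`-reach `w`: the subdigraph `D⟨B⟩` has a walk from `v` to `w`. -/
def CanReach {V A : Type*} (ψ : A → V × V) (B : Set A) (v w : V) : Prop :=
  Relation.ReflTransGen (ArcStep ψ B) v w

/-- `B ⊆ A` is acyclic: the subdigraph `D⟨B⟩` has no directed cycles
(equivalently, no closed walk of positive length). -/
def IsAcyclic {V A : Type*} (ψ : A → V × V) (B : Set A) : Prop :=
  ∀ v : V, ¬ Relation.TransGen (ArcStep ψ B) v v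

/-- `B` is an `s`-convergence: `B` is acyclic and `s` is a to-root of `D⟨B⟩`,
i.e. every vertex can `B`-reach `s`. -/
def IsConvergence {V A : Type*} (ψ : A → V × V) (B : Set A) (s : V) : Prop :=
  IsAcyclic ψ B ∧ ∀ v : V, CanReach ψ B v s

/-- `γ_k(s)`: the number of `s`-convergences of size `k`. -/
noncomputable def gammaCount {V A : Type*} (ψ : A → V × V) (k : ℕ) (s : V) : ℕ :=
  {B : Set A | IsConvergence ψ B s ∧ B.ncard = k}.ncard

/-- The attraction basin of `s` with respect to `B`: all vertices that can `B`-reach `s`. -/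
def basin {V A : Type*} (ψ : A → V × V) (B : Set A) (s : V) : Set V :=
  {v : V | CanReach ψ B v s}

/-- `A(P,Q)`: the set of arcs with source in `P` and target in `Q`. -/
def arcsFromTo {V A : Type*} (ψ : A → V × V) (P Q : Set V) : Set A :=
  {a : A | (ψ a).1 ∈ P ∧ (ψ a).2 ∈ Q}

/-- The outdegree of a vertex: the number of arcs with source `v`. -/
noncomputable def outDeg {V A : Type*} (ψ : A → V × V) (v : V) : ℕ :=
  {a : A | (ψ a).1 = v}.ncard

/-- The indegree of a vertex: the number of arcs with target `v`. -/
noncomputable def inDeg {V A : Type*} (ψ : A → V × V) (v : V) : ℕ :=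
  {a : A | (ψ a).2 = v}.ncard

/-- The digraph is balanced: each vertex has outdegree equal to indegree. -/
def IsBalanced {V A : Type*} (ψ : A → V × V) : Prop :=
  ∀ v : V, outDeg ψ v = inDeg ψ v

/-- `U_k`: the set of all acyclic `k`-element subsets `B` of `A` such that each
vertex can `B`-reach `s` or can `B`-reach `t`. -/
def Uset {V A : Type*} (ψ : A → V × V) (s t : V) (k : ℕ) : Set (Set A) :=
  {B : Set A | IsAcyclic ψ B ∧ B.ncard = k ∧ basin ψ B s ∪ basin ψ B t = Set.univ}

/-- `X_i^{P,Q}`: the set of all acyclic `i`-element subsets `B` of `A` with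
`S(B) = P` and `T(B) = Q` (empty for negative `i`). -/
def Xset {V A : Type*} (ψ : A → V × V) (s t : V) (P Q : Set V) (i : ℤ) : Set (Set A) :=
  {B : Set A | IsAcyclic ψ B ∧ (B.ncard : ℤ) = i ∧ basin ψ B s = P ∧ basin ψ B t = Q}

/-- `|X_i^{P,Q}|`. -/
noncomputable def Xcount {V A : Type*} (ψ : A → V × V) (s t : V) (P Q : Set V) (i : ℤ) : ℕ :=
  (Xset ψ s t P Q i).ncard

/-!
Write `Q = Pᶜ`. If `S(B) = P`, no arc of `B` enters `P` from `Q`, so `B` consists of arcs inside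
`P`, arcs inside `Q` (which already let every vertex of `Q` reach `t`, hence `t ∈ Q`) and arcs
from `P` to `Q`. In a balanced digraph as many arcs run from `P` to `Q` as from `Q` to `P`, so
there is an involution `σ` of the arcs exchanging these two classes and fixing all other arcs.
Applying `σ` to `B` trades its arcs from `P` to `Q` for arcs from `Q` to `P`: the result still
has `k` arcs, is acyclic because no arc leads back from `P` to `Q`, and now `T(σ B) = Q`.
By symmetry `σ` also maps the second family into the first, and it is injective on sets.
-/

open Relation Set

section Reachability

variable {V A : Type*} {ψ : A → V × V} {B B' : Set A} {W : Set V} {v w : V}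

theorem arcStep_iff : ArcStep ψ B v w ↔ ∃ a ∈ B, (ψ a).1 = v ∧ (ψ a).2 = w := by
  simp only [ArcStep, Prod.ext_iff]

theorem arcStep_of_mem {a : A} (ha : a ∈ B) : ArcStep ψ B (ψ a).1 (ψ a).2 :=
  ⟨a, ha, rfl⟩

theorem ArcStep.mono (h : B ⊆ B') : ArcStep ψ B v w → ArcStep ψ B' v w :=
  fun ⟨a, ha, hψ⟩ => ⟨a, h ha, hψ⟩

theorem CanReach.mono (h : B ⊆ B') (hvw : CanReach ψ B v w) : CanReach ψ B' v w :=
  ReflTransGen.mono (fun _ _ => ArcStep.mono h) _ _ hvw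

theorem IsAcyclic.subset (h : B ⊆ B') (hB' : IsAcyclic ψ B') : IsAcyclic ψ B :=
  fun v hv => hB' v (TransGen.mono (fun _ _ => ArcStep.mono h) _ _ hv)

theorem CanReach.restrict_source (hW : ∀ a ∈ B, (ψ a).1 ∈ W → (ψ a).2 ∈ W)
    (h : CanReach ψ B v w) (hv : v ∈ W) :
    w ∈ W ∧ CanReach ψ {a ∈ B | (ψ a).1 ∈ W} v w := by
  induction h with
  | refl => exact ⟨hv, .refl⟩
  | tail _ hstep ih =>
    obtain ⟨a, ha, rfl, rfl⟩ := arcStep_iff.1 hstep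
    exact ⟨hW a ha ih.1, ih.2.tail (arcStep_of_mem ⟨ha, ih.1⟩)⟩

theorem CanReach.restrict_target (hW : ∀ a ∈ B, (ψ a).2 ∈ W → (ψ a).1 ∈ W)
    (h : CanReach ψ B v w) (hw : w ∈ W) :
    v ∈ W ∧ CanReach ψ {a ∈ B | (ψ a).2 ∈ W} v w := by
  induction h using ReflTransGen.head_induction_on with
  | refl => exact ⟨hw, .refl⟩
  | head hstep _ ih =>
    obtain ⟨a, ha, rfl, rfl⟩ := arcStep_iff.1 hstep
    exact ⟨hW a ha ih.1, ih.2.head (arcStep_of_mem ⟨ha, ih.1⟩)⟩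

end Reachability

section Basin

variable {V A : Type*} {ψ : A → V × V} {B : Set A} {s t v : V}

theorem source_mem_basin {a : A} (ha : a ∈ B) (h : (ψ a).2 ∈ basin ψ B s) :
    (ψ a).1 ∈ basin ψ B s :=
  ReflTransGen.head (arcStep_of_mem ha) h

theorem canReach_diff_of_mem_basin (hv : v ∈ basin ψ B s) :
    CanReach ψ (B \ arcsFromTo ψ (basin ψ B s) (basin ψ B s)ᶜ) v s := by
  refine ((CanReach.restrict_target (fun a ha => source_mem_basin ha) hv
    (ReflTransGen.refl : CanReach ψ B s s)).2).mono ?_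
  rintro a ⟨ha, htarget⟩
  exact ⟨ha, fun hout => hout.2 htarget⟩

theorem canReach_diff_of_notMem_basin (hv : v ∉ basin ψ B s) (hvt : CanReach ψ B v t) :
    t ∉ basin ψ B s ∧
      CanReach ψ (B \ arcsFromTo ψ (basin ψ B s) (basin ψ B s)ᶜ) v t := by
  obtain ⟨ht, hreach⟩ := hvt.restrict_source
    (W := (basin ψ B s)ᶜ) (fun a ha => mt (source_mem_basin ha)) hv
  refine ⟨ht, hreach.mono ?_⟩
  rintro a ⟨ha, hsource⟩
  exact ⟨ha, fun hout => hsource hout.1⟩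

end Basin

section Reassembly

variable {V A : Type*} {ψ : A → V × V} {P : Set V} {B₀ C : Set A}

theorem isAcyclic_union_of_subset_arcsFromTo_compl (hB₀ : IsAcyclic ψ B₀)
    (hpart : ∀ a ∈ B₀, (ψ a).1 ∈ P ↔ (ψ a).2 ∈ P) (hC : C ⊆ arcsFromTo ψ Pᶜ P) :
    IsAcyclic ψ (B₀ ∪ C) := by
  have hfwd : ∀ a ∈ B₀ ∪ C, (ψ a).1 ∈ P → (ψ a).2 ∈ P ∧ a ∈ B₀ := by
    rintro a (ha | ha) hsrc
    · exact ⟨(hpart a ha).1 hsrc, ha⟩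
    · exact absurd hsrc (hC ha).1
  have hbwd : ∀ a ∈ B₀ ∪ C, (ψ a).2 ∈ Pᶜ → (ψ a).1 ∈ Pᶜ ∧ a ∈ B₀ := by
    rintro a (ha | ha) htgt
    · exact ⟨mt (hpart a ha).1 htgt, ha⟩
    · exact absurd (hC ha).2 htgt
  -- A cycle through `P` never leaves `P`, and one through `Pᶜ` never enters `P`;
  -- either way it avoids `C`.
  intro v hcycle
  obtain ⟨u, hvu, huv : CanReach ψ (B₀ ∪ C) u v⟩ := TransGen.head'_iff.1 hcycle
  obtain ⟨a, ha, rfl, rfl⟩ := arcStep_iff.1 hvu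
  by_cases hv : (ψ a).1 ∈ P
  · obtain ⟨hu, ha₀⟩ := hfwd a ha hv
    have hreach := (huv.restrict_source (fun a ha h => (hfwd a ha h).1) hu).2.mono
      fun b hb => (hfwd b hb.1 hb.2).2
    exact hB₀ _ (TransGen.head' (arcStep_of_mem ha₀) hreach)
  · obtain ⟨hu, hreach⟩ := huv.restrict_target (fun a ha h => (hbwd a ha h).1) hv
    exact hB₀ _ (TransGen.head' (arcStep_of_mem (hbwd a ha hu).2)
      (hreach.mono fun b hb => (hbwd b hb.1 hb.2).2))

theorem basin_union_of_subset_arcsFromTo_compl {t : V}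
    (hpart : ∀ a ∈ B₀, (ψ a).1 ∈ P ↔ (ψ a).2 ∈ P) (hC : C ⊆ arcsFromTo ψ Pᶜ P)
    (ht : t ∉ P) (hreach : ∀ v ∈ Pᶜ, CanReach ψ B₀ v t) :
    basin ψ (B₀ ∪ C) t = Pᶜ := by
  refine Subset.antisymm (fun v hvt hv => ht ?_) fun v hv => (hreach v hv).mono subset_union_left
  refine (hvt.restrict_source (fun a ha hsrc => ?_) hv).1
  rcases ha with ha | ha
  · exact (hpart a ha).1 hsrc
  · exact absurd hsrc (hC ha).1

end Reassembly

section Transfer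

variable {V A : Type*} {ψ : A → V × V} {P : Set V} {B : Set A} {s t : V} {k : ℕ}

theorem uset_comm : Uset ψ s t k = Uset ψ t s k := by
  ext B
  simp only [Uset, mem_ofPred_eq, union_comm (basin ψ B s)]

theorem image_mem_uset_and_basin_eq_compl {σ : A → A} (hσ : Function.Injective σ)
    (hσK : MapsTo σ (arcsFromTo ψ P Pᶜ) (arcsFromTo ψ Pᶜ P))
    (hσfix : ∀ a ∉ arcsFromTo ψ P Pᶜ ∪ arcsFromTo ψ Pᶜ P, σ a = a)
    (hP : Pᶜ.Nonempty) (hB : B ∈ Uset ψ s t k) (hBs : basin ψ B s = P) :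
    σ '' B ∈ Uset ψ s t k ∧ basin ψ (σ '' B) t = Pᶜ := by
  subst hBs
  obtain ⟨hacyc, hcard, hcover⟩ := hB
  set K := arcsFromTo ψ (basin ψ B s) (basin ψ B s)ᶜ
  have hpart : ∀ a ∈ B \ K, (ψ a).1 ∈ basin ψ B s ↔ (ψ a).2 ∈ basin ψ B s :=
    fun a ha => ⟨fun h => not_not.1 fun h' => ha.2 ⟨h, h'⟩, source_mem_basin ha.1⟩
  have hfix : EqOn σ id (B \ K) := by
    rintro a ⟨ha, haK⟩
    refine hσfix a fun haK' => ?_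
    rcases haK' with haK' | ⟨hsrc, htgt⟩
    exacts [haK haK', hsrc (source_mem_basin ha htgt)]
  have himage : σ '' B = (B \ K) ∪ σ '' (B ∩ K) := by
    conv_lhs => rw [← sdiff_union_inter B K, image_union, hfix.image_eq_self]
  have hC : σ '' (B ∩ K) ⊆ arcsFromTo ψ (basin ψ B s)ᶜ (basin ψ B s) :=
    (hσK.mono_left inter_subset_right).image_subset
  have hreach : ∀ v ∈ (basin ψ B s)ᶜ, CanReach ψ (B \ K) v t := fun v hv =>
    (canReach_diff_of_notMem_basin hv ((hcover.symm ▸ mem_univ v).resolve_left hv)).2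
  have ht : t ∉ basin ψ B s := by
    obtain ⟨v, hv⟩ := hP
    exact (canReach_diff_of_notMem_basin hv ((hcover.symm ▸ mem_univ v).resolve_left hv)).1
  have hbasin : basin ψ (σ '' B) t = (basin ψ B s)ᶜ := by
    rw [himage]
    exact basin_union_of_subset_arcsFromTo_compl hpart hC ht hreach
  refine ⟨⟨?_, by rwa [ncard_image_of_injective _ hσ], ?_⟩, hbasin⟩
  · rw [himage]
    exact isAcyclic_union_of_subset_arcsFromTo_compl (hacyc.subset sdiff_subset) hpart hC
  · refine eq_univ_of_forall fun v => ?_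
    by_cases hv : v ∈ basin ψ B s
    · left
      rw [himage]
      exact (canReach_diff_of_mem_basin hv).mono subset_union_left
    · exact Or.inr (hbasin ▸ hv)

end Transfer

theorem ncard_source_mem_eq_ncard_target_mem {V A : Type*} [Fintype V] [Fintype A]
    {ψ : A → V × V} (hbal : IsBalanced ψ) (P : Set V) :
    {a | (ψ a).1 ∈ P}.ncard = {a | (ψ a).2 ∈ P}.ncard := by
  classical
  have hfiber (f : A → V) :
      {a | f a ∈ P}.ncard = ∑ v ∈ P.toFinset, {a | f a = v}.ncard := by
    simp only [ncard_eq_toFinset_card', toFinset_ofPred]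
    convert (Finset.sum_card_fiberwise_eq_card_filter Finset.univ P.toFinset f).symm using 2
    simp
  rw [hfiber, hfiber]
  exact Finset.sum_congr rfl fun v _ => hbal v

theorem ncard_arcsFromTo_compl_eq {V A : Type*} [Fintype V] [Fintype A]
    {ψ : A → V × V} (hbal : IsBalanced ψ) (P : Set V) :
    (arcsFromTo ψ P Pᶜ).ncard = (arcsFromTo ψ Pᶜ P).ncard := by
  have hsplit : arcsFromTo ψ Pᶜ P = {a | (ψ a).2 ∈ P} \ {a | (ψ a).1 ∈ P} := by
    ext a
    exact and_comm
  have h := ncard_source_mem_eq_ncard_target_mem hbal P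
  rw [← ncard_inter_add_ncard_sdiff_eq_ncard {a | (ψ a).1 ∈ P} {a | (ψ a).2 ∈ P},
    ← ncard_inter_add_ncard_sdiff_eq_ncard {a | (ψ a).2 ∈ P} {a | (ψ a).1 ∈ P},
    inter_comm] at h
  rw [hsplit]
  exact add_left_cancel h

theorem exists_involutive_mapsTo_swap {α : Type*} {K K' : Set α} (hd : Disjoint K K')
    (e : K ≃ K') :
    ∃ σ : α → α, Function.Involutive σ ∧ MapsTo σ K K' ∧ MapsTo σ K' K ∧
      ∀ a ∉ K ∪ K', σ a = a := by
  classical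
  refine ⟨fun a => if h : a ∈ K then e ⟨a, h⟩ else if h' : a ∈ K' then e.symm ⟨a, h'⟩
    else a, fun a => ?_, fun a ha => by simp [ha],
    fun a ha => by simp [ha, hd.notMem_of_mem_right ha], fun a ha => by simp_all⟩
  by_cases ha : a ∈ K
  · simp [ha, hd.notMem_of_mem_right (e ⟨a, ha⟩).2]
  by_cases ha' : a ∈ K' <;> simp [ha, ha']

/-- For a balanced multidigraph and nonempty `P, Q` with `V = P ⊔ Q`,
`|{B ∈ U_k : S(B) = P}| = |{B ∈ U_k : T(B) = Q}|`. -/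
theorem count_S_eq_P_eq_count_T_eq_Q {V A : Type*} [Fintype V] [Fintype A]
    (ψ : A → V × V) (hbal : IsBalanced ψ) (s t : V) (k : ℕ)
    (P Q : Set V) (hP : P.Nonempty) (hQ : Q.Nonempty)
    (hunion : P ∪ Q = Set.univ) (hdisj : P ∩ Q = ∅) :
    {B ∈ Uset ψ s t k | basin ψ B s = P}.ncard =
      {B ∈ Uset ψ s t k | basin ψ B t = Q}.ncard := by
  obtain rfl : Q = Pᶜ :=
    (IsCompl.compl_eq ⟨disjoint_iff_inter_eq_empty.2 hdisj, codisjoint_iff.2 hunion⟩).symm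
  obtain ⟨e⟩ : Nonempty (arcsFromTo ψ P Pᶜ ≃ arcsFromTo ψ Pᶜ P) := by
    rw [← Finite.card_eq, Nat.card_coe_set_eq, Nat.card_coe_set_eq]
    exact ncard_arcsFromTo_compl_eq hbal P
  obtain ⟨σ, hσ, hK, hK', hfix⟩ := exists_involutive_mapsTo_swap
    (disjoint_left.2 fun a h h' => h'.1 h.1) e
  have hST : ∀ B ∈ {B ∈ Uset ψ s t k | basin ψ B s = P},
      σ '' B ∈ {B ∈ Uset ψ s t k | basin ψ B t = Pᶜ} :=
    fun B hB => image_mem_uset_and_basin_eq_compl hσ.injective hK hfix hQ hB.1 hB.2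
  have hTS : ∀ B ∈ {B ∈ Uset ψ s t k | basin ψ B t = Pᶜ},
      σ '' B ∈ {B ∈ Uset ψ s t k | basin ψ B s = P} := fun B hB => by
    have hσB := image_mem_uset_and_basin_eq_compl (P := Pᶜ) hσ.injective (by rwa [compl_compl])
      (by rwa [compl_compl, union_comm]) (by rwa [compl_compl]) (uset_comm ▸ hB.1) hB.2
    rwa [compl_compl, uset_comm] at hσB
  have hinj : Function.Injective (σ '' ·) := hσ.injective.image_injective
  exact le_antisymm (ncard_le_ncard_of_injOn _ hST hinj.injOn (toFinite _))
    (ncard_le_ncard_of_injOn _ hTS hinj.injOn (toFinite _))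
end

section
/- Let D = (V, A, ψ) be a multidigraph, let s, t ∈ V, and let k ∈ ℕ. Let P and Q be two nonempty subsets of V with V = P ⊔ Q, and let C be a subset of A(P,Q). If E is an acyclic (k − |C|)-element subset of A satisfying S(E) = P and T(E) = Q, then E ∪ C belongs to U_k and satisfies S(E ∪ C) = P and (E ∪ C) ∩ A(P,Q) = C. -/
/-!
Basins are closed under walking backwards along arcs, so `S(E) = P` and `T(E) = Q = Pᶜ` force every
arc of `E` to stay inside `P` or inside `Q`, while every arc of `C` goes from `P` to `Q`. Hence a walk
in `D⟨E ∪ C⟩` either uses only arcs of `E`, or it starts in `P` and ends in `Q`. The latter can neither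
close up into a cycle nor end at `s ∈ P`, so `E ∪ C` is acyclic and `S(E ∪ C) = S(E) = P`; and `E`
contains no arc of `A(P,Q)`, which gives the cardinality and `(E ∪ C) ∩ A(P,Q) = C`.
-/

namespace Relation

variable {α : Type*} {r c : α → α → Prop} {X : Set α}

theorem mem_of_reflTransGen (hr : ∀ x y, r x y → y ∈ X → x ∈ X) {x y : α}
    (h : ReflTransGen r x y) (hy : y ∈ X) : x ∈ X := by
  induction h using ReflTransGen.head_induction_on with
  | refl => exact hy
  | head hxz _ ih => exact hr _ _ hxz ih

theorem transGen_sup_or_crossing (hr : ∀ x y, r x y → y ∈ X → x ∈ X)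
    (hc : ∀ x y, c x y → x ∈ X ∧ y ∉ X) {x y : α} (h : TransGen (r ⊔ c) x y) :
    TransGen r x y ∨ (x ∈ X ∧ y ∉ X) := by
  induction h with
  | single hxy =>
    rcases hxy with hxy | hxy
    · exact Or.inl (TransGen.single hxy)
    · exact Or.inr (hc _ _ hxy)
  | tail _ hyz ih =>
    rcases hyz with hyz | hyz
    · rcases ih with ih | ⟨hx, hy⟩
      · exact Or.inl (ih.tail hyz)
      · exact Or.inr ⟨hx, fun hz => hy (hr _ _ hyz hz)⟩
    · obtain ⟨hy, hz⟩ := hc _ _ hyz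
      rcases ih with ih | ⟨hx, hy'⟩
      · exact Or.inr ⟨mem_of_reflTransGen hr ih.to_reflTransGen hy, hz⟩
      · exact absurd hy hy'

end Relation

open Relation

section Multidigraph

variable {V A : Type*} {ψ : A → V × V}

theorem arcStep_union (B B' : Set A) :
    ArcStep ψ (B ∪ B') = ArcStep ψ B ⊔ ArcStep ψ B' := by
  ext v w
  simp only [ArcStep, Set.mem_union, or_and_right, exists_or, Pi.sup_apply, sup_Prop_eq]

theorem basin_mono {B B' : Set A} (h : B ⊆ B') (s : V) : basin ψ B s ⊆ basin ψ B' s :=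
  fun v hv => ReflTransGen.mono (fun _ _ ⟨a, ha, hψ⟩ => ⟨a, h ha, hψ⟩) v s hv

theorem mem_basin_of_arcStep {B : Set A} {s v w : V} (h : ArcStep ψ B v w)
    (hw : w ∈ basin ψ B s) : v ∈ basin ψ B s :=
  ReflTransGen.head h hw

theorem arcStep_of_subset_arcsFromTo {B : Set A} {P Q : Set V} (hB : B ⊆ arcsFromTo ψ P Q)
    {v w : V} (h : ArcStep ψ B v w) : v ∈ P ∧ w ∈ Q := by
  obtain ⟨a, ha, hψ⟩ := h
  simpa [arcsFromTo, hψ] using hB ha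

variable {E C : Set A} {s : V}

theorem transGen_union_or_crossing (hC : C ⊆ arcsFromTo ψ (basin ψ E s) (basin ψ E s)ᶜ)
    {v w : V} (h : TransGen (ArcStep ψ (E ∪ C)) v w) :
    TransGen (ArcStep ψ E) v w ∨ (v ∈ basin ψ E s ∧ w ∉ basin ψ E s) := by
  rw [arcStep_union] at h
  exact transGen_sup_or_crossing (fun _ _ h => mem_basin_of_arcStep h)
    (fun _ _ h => arcStep_of_subset_arcsFromTo hC h) h

theorem isAcyclic_union (hE : IsAcyclic ψ E)
    (hC : C ⊆ arcsFromTo ψ (basin ψ E s) (basin ψ E s)ᶜ) : IsAcyclic ψ (E ∪ C) := by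
  intro v hv
  rcases transGen_union_or_crossing hC hv with hv | ⟨hin, hout⟩
  · exact hE v hv
  · exact hout hin

theorem basin_union_eq (hC : C ⊆ arcsFromTo ψ (basin ψ E s) (basin ψ E s)ᶜ) :
    basin ψ (E ∪ C) s = basin ψ E s := by
  refine subset_antisymm (fun v hv => ?_) (basin_mono Set.subset_union_left s)
  rcases reflTransGen_iff_eq_or_transGen.mp hv with rfl | hv
  · exact ReflTransGen.refl
  · rcases transGen_union_or_crossing hC hv with hv | ⟨_, hs⟩
    · exact hv.to_reflTransGen
    · exact absurd ReflTransGen.refl hs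

theorem disjoint_arcsFromTo_basin {X : Set V} {t : V} (hX : Disjoint X (basin ψ E t)) :
    Disjoint E (arcsFromTo ψ X (basin ψ E t)) := by
  refine Set.disjoint_left.mpr fun a haE ⟨hsrc, htgt⟩ => ?_
  exact hX.notMem_of_mem_left hsrc (mem_basin_of_arcStep ⟨a, haE, rfl⟩ htgt)

end Multidigraph

theorem union_mem_U_general {V A : Type*} [Fintype A]
    (ψ : A → V × V) (s t : V) (k : ℕ)
    (P Q : Set V)
    (hunion : P ∪ Q = Set.univ) (hdisj : P ∩ Q = ∅)
    (C : Set A) (hC : C ⊆ arcsFromTo ψ P Q)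
    (E : Set A) (hE : IsAcyclic ψ E)
    (hcard : (E.ncard : ℤ) = (k : ℤ) - C.ncard)
    (hSE : basin ψ E s = P) (hTE : basin ψ E t = Q) :
    E ∪ C ∈ Uset ψ s t k ∧ basin ψ (E ∪ C) s = P ∧
      (E ∪ C) ∩ arcsFromTo ψ P Q = C := by
  subst hSE hTE
  have hcompl : basin ψ E t = (basin ψ E s)ᶜ := (IsCompl.of_eq hdisj hunion).compl_eq.symm
  have hC' : C ⊆ arcsFromTo ψ (basin ψ E s) (basin ψ E s)ᶜ := hcompl ▸ hC
  have hS := basin_union_eq hC'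
  have hEX := disjoint_arcsFromTo_basin (Set.disjoint_iff_inter_eq_empty.mpr hdisj)
  have hncard : (E ∪ C).ncard = k := by
    have := Set.ncard_union_eq (hEX.mono_right hC)
    omega
  have hcover : basin ψ (E ∪ C) s ∪ basin ψ (E ∪ C) t = Set.univ :=
    Set.eq_univ_of_univ_subset <| hunion ▸ hS ▸
      Set.union_subset_union_right _ (basin_mono Set.subset_union_left t)
  refine ⟨⟨isAcyclic_union hE hC', hncard, hcover⟩, hS, ?_⟩
  rw [Set.union_inter_distrib_right, hEX.inter_eq, Set.empty_union, Set.inter_eq_left.mpr hC]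

/-- If `E` is an acyclic `(k − |C|)`-element subset of `A` with
`S(E) = P` and `T(E) = Q`, then `E ∪ C ∈ U_k`, `S(E ∪ C) = P` and
`(E ∪ C) ∩ A(P,Q) = C`. -/
theorem union_mem_U {V A : Type*} [Fintype V] [Fintype A]
    (ψ : A → V × V) (s t : V) (k : ℕ)
    (P Q : Set V) (hP : P.Nonempty) (hQ : Q.Nonempty)
    (hunion : P ∪ Q = Set.univ) (hdisj : P ∩ Q = ∅)
    (C : Set A) (hC : C ⊆ arcsFromTo ψ P Q)
    (E : Set A) (hE : IsAcyclic ψ E)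
    (hcard : (E.ncard : ℤ) = (k : ℤ) - C.ncard)
    (hSE : basin ψ E s = P) (hTE : basin ψ E t = Q) :
    E ∪ C ∈ Uset ψ s t k ∧ basin ψ (E ∪ C) s = P ∧
      (E ∪ C) ∩ arcsFromTo ψ P Q = C :=
  union_mem_U_general ψ s t k P Q hunion hdisj C hC E hE hcard hSE hTE
end
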